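/- arXiv:1303.2103 — 2 statements merged into one kernel-verified Lean document; each statement's English description precedes it below -/
import Mathlib

section
/- Let k ≥ 2 and let n ≥ 2 be the largest natural number such that k ≥ n(n-1)/2 + 1. Then for every surjective colouring Δ : ℕ^(2) ↠ [k], the set F_Δ has size at least n. Equivalently, ψ(k) ≥ n. -/
/-- The colour of the unordered edge `{x, y}` (only values on distinct pairs matter). -/
def edgeCol (Δ : ℕ → ℕ → ℕ) (x y : ℕ) : ℕ := Δ (min x y) (max x y)

/-- `colourSet Δ X` is the set of colours attained by `Δ` on edges with both endpoints in `X`. -/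
def colourSet (Δ : ℕ → ℕ → ℕ) (X : Set ℕ) : Set ℕ :=
  {c | ∃ x ∈ X, ∃ y ∈ X, x ≠ y ∧ edgeCol Δ x y = c}

/-- `Δ` is a surjective colouring `ℕ^(2) ↠ [k]` of the edges of the complete
graph on `ℕ` with colour set `[k] = {1, …, k}`. -/
def IsColouring (Δ : ℕ → ℕ → ℕ) (k : ℕ) : Prop :=
  (∀ x y : ℕ, x ≠ y → edgeCol Δ x y ∈ Finset.Icc 1 k) ∧
  (∀ c ∈ Finset.Icc 1 k, ∃ x y : ℕ, x ≠ y ∧ edgeCol Δ x y = c)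

/-- `F_Δ`: the set of `m ∈ [k]` for which some infinite `X ⊆ ℕ` is exactly `m`-coloured. -/
def FSet (Δ : ℕ → ℕ → ℕ) (k : ℕ) : Set ℕ :=
  {m | m ∈ Finset.Icc 1 k ∧ ∃ X : Set ℕ, X.Infinite ∧ (colourSet Δ X).ncard = m}

/-- `ψ k`: the minimum of `|F_Δ|` over all surjective colourings `Δ : ℕ^(2) ↠ [k]`. -/
noncomputable def psi (k : ℕ) : ℕ :=
  sInf {m | ∃ Δ : ℕ → ℕ → ℕ, IsColouring Δ k ∧ (FSet Δ k).ncard = m}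

/-!
A nonprincipal ultrafilter yields a colour `c₀` and colours `cv x` such that every finite `S` is
followed by an infinite `c₀`-monochromatic set `T` that each `x ∈ S` sees in the single colour
`cv x`. The colours on `S ∪ T` are then `{c₀} ∪ cv(S) ∪ Δ(S^(2))`, so their number is in `F_Δ`:
it is `1` for `S = ∅` and `k` once `S` carries an edge of every colour. Adding a vertex to `S`
adds at most `#S + 1` colours; growing `S` carefully shows that above each attained value `g < k`
there is another within distance `#{attained values ≤ g}`. The attained values
`1 = g₁ < ⋯ < g_t = k` thus satisfy `g_{i+1} ≤ g_i + i`, so `k ≤ 1 + t(t-1)/2` and `t ≥ n`.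
-/

open Finset

open Filter Set in
theorem exists_monochromatic_tail {α β : Type*} [Infinite α] {ec : α → α → β}
    (hsymm : ∀ x y, ec x y = ec y x) {C : Set β} (hC : C.Finite)
    (hec : ∀ x y, x ≠ y → ec x y ∈ C) :
    ∃ (c₀ : β) (cv : α → β), ∀ S : Finset α, ∃ T : Set α, T.Infinite ∧
      T.Pairwise (fun x y => ec x y = c₀) ∧ ∀ x ∈ S, ∀ y ∈ T, x ≠ y ∧ ec x y = cv x := by
  let U := hyperfilter α
  have hne : ∀ x, ∀ᶠ y in (U : Filter α), x ≠ y := fun x =>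
    hyperfilter_le_cofinite <| (finite_singleton x).eventually_cofinite_notMem.mono
      fun y hy => Ne.symm hy
  have hcv : ∀ x, ∃ c ∈ C, ∀ᶠ y in (U : Filter α), ec x y = c := fun x =>
    (Ultrafilter.eventually_exists_mem_iff hC).1 <| (hne x).mono fun y hy => ⟨_, hec x y hy, rfl⟩
  choose cv hcvC hcv using hcv
  obtain ⟨c₀, -, hc₀⟩ := (Ultrafilter.eventually_exists_mem_iff (f := U)
    (P := fun c x => cv x = c) hC).1 <| Eventually.of_forall fun x => ⟨cv x, hcvC x, rfl⟩
  refine ⟨c₀, cv, fun S => ?_⟩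
  let P y := y ∉ S ∧ cv y = c₀ ∧ ∀ x ∈ S, ec x y = cv x
  have hP : ∀ᶠ y in (U : Filter α), P y :=
    Eventually.and (hyperfilter_le_cofinite S.eventually_cofinite_notMem)
      (hc₀.and ((eventually_all_finset S).2 fun x _ => hcv x))
  obtain ⟨f, hfP, hf⟩ := exists_seq_of_forall_finset_exists P (fun x y => x ≠ y ∧ ec x y = c₀)
    fun s hs => (hP.and ((eventually_all_finset s).2 fun x hx =>
      (hne x).and ((hcv x).mono fun y hy => hy.trans (hs x hx).2.1))).exists
  have hpair : ∀ m n, m ≠ n → f m ≠ f n ∧ ec (f m) (f n) = c₀ := by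
    intro m n hmn
    rcases hmn.lt_or_gt with h | h
    · exact hf m n h
    · exact ⟨(hf n m h).1.symm, hsymm (f m) (f n) ▸ (hf n m h).2⟩
  have hinj : f.Injective := fun m n h => by_contra fun hmn => (hpair m n hmn).1 h
  refine ⟨range f, infinite_range_of_injective hinj, ?_, ?_⟩
  · rintro _ ⟨m, rfl⟩ _ ⟨n, rfl⟩ hmn
    exact (hpair m n (ne_of_apply_ne f hmn)).2
  · rintro x hx _ ⟨n, rfl⟩
    exact ⟨fun h => (hfP n).1 (h ▸ hx), (hfP n).2.2 x hx⟩

theorem exists_le_lt_insert_of_lt_union {α γ : Type*} [DecidableEq α] [LinearOrder γ]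
    (F : Finset α → γ) {g : γ} {S : Finset α} (hS : F S ≤ g) (S' : Finset α)
    (hS' : g < F (S ∪ S')) : ∃ T v, v ∉ T ∧ F T ≤ g ∧ g < F (insert v T) := by
  induction S' using Finset.induction_on with
  | empty => exact absurd hS (by simpa using hS')
  | insert a s _ ih =>
    rw [union_insert] at hS'
    by_cases hs : F (S ∪ s) ≤ g
    · refine ⟨S ∪ s, a, fun ha => ?_, hs, hS'⟩
      rw [insert_eq_of_mem ha] at hS'
      exact hs.not_gt hS'
    · exact ih (not_le.1 hs)

theorem card_filter_le_lt {α : Type*} [LinearOrder α] {G : Finset α} {b b' : α} (hb : b < b')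
    (hb' : b' ∈ G) : #{m ∈ G | m ≤ b} < #{m ∈ G | m ≤ b'} := by
  refine card_lt_card ((ssubset_iff_of_subset ?_).2 ⟨b', ?_, ?_⟩)
  · exact monotone_filter_right G fun m _ hm => hm.trans hb.le
  · exact mem_filter.2 ⟨hb', le_rfl⟩
  · exact fun h => (mem_filter.1 h).2.not_gt hb

section TailColours

variable {α β : Type*} [DecidableEq β] {c₀ : β} {cv : α → β} {ec : α → α → β}

variable (c₀ cv ec) in
/-- The colours on `S ∪ T` when `T` is an infinite `c₀`-monochromatic set that each `x ∈ S` sees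
only in colour `cv x` (see `colourSet_union_eq_tailColours`). -/
def tailColours (S : Finset α) : Finset β :=
  insert c₀ (S.image cv ∪ S.offDiag.image fun p => ec p.1 p.2)

local notation "𝒞" => tailColours c₀ cv ec

theorem mem_tailColours {S : Finset α} {c : β} :
    c ∈ 𝒞 S ↔ c = c₀ ∨ (∃ u ∈ S, cv u = c) ∨ ∃ u ∈ S, ∃ w ∈ S, u ≠ w ∧ ec u w = c := by
  simp [tailColours, and_assoc]

theorem self_mem_tailColours (S : Finset α) : c₀ ∈ 𝒞 S :=
  mem_insert_self _ _

theorem apply_mem_tailColours {S : Finset α} {u : α} (hu : u ∈ S) : cv u ∈ 𝒞 S :=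
  mem_tailColours.2 <| .inr <| .inl ⟨u, hu, rfl⟩

theorem edge_mem_tailColours {S : Finset α} {u w : α} (hu : u ∈ S) (hw : w ∈ S) (huw : u ≠ w) :
    ec u w ∈ 𝒞 S :=
  mem_tailColours.2 <| .inr <| .inr ⟨u, hu, w, hw, huw, rfl⟩

theorem tailColours_mono : Monotone 𝒞 := fun _ _ hST =>
  insert_subset_insert _ <| union_subset_union (image_subset_image hST)
    (image_subset_image (offDiag_mono hST))

@[simp]
theorem tailColours_empty : 𝒞 ∅ = {c₀} := by
  simp [tailColours]

theorem tailColours_singleton (v : α) : 𝒞 {v} = {c₀, cv v} := by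
  simp [tailColours]

theorem card_tailColours_singleton_le (v : α) : #(𝒞 {v}) ≤ 2 := by
  rw [tailColours_singleton]
  exact card_le_two

theorem exists_subset_tailColours (C : Finset β) (hC : ∀ c ∈ C, ∃ u w, u ≠ w ∧ ec u w = c) :
    ∃ S, C ⊆ 𝒞 S := by
  classical
  induction C using Finset.induction_on with
  | empty => exact ⟨∅, empty_subset _⟩
  | insert c C _ ih =>
    obtain ⟨S, hS⟩ := ih fun c' hc' => hC c' (mem_insert_of_mem hc')
    obtain ⟨u, w, huw, rfl⟩ := hC c (mem_insert_self c C)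
    refine ⟨insert u (insert w S), insert_subset ?_ (hS.trans (tailColours_mono ?_))⟩
    · exact edge_mem_tailColours (mem_insert_self _ _)
        (mem_insert_of_mem (mem_insert_self _ _)) huw
    · exact (subset_insert _ _).trans (subset_insert _ _)

theorem le_card_filter_card_tailColours_singleton {G : Finset ℕ}
    (hG : ∀ S, #(𝒞 S) ∈ G) (v : α) :
    #(𝒞 {v}) ≤ #{m ∈ G | m ≤ #(𝒞 {v})} := by
  have h1 : 1 ∈ G := by simpa using hG ∅
  have hv := hG {v}
  rw [tailColours_singleton] at hv ⊢
  by_cases h : c₀ = cv v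
  · rw [h, pair_eq_singleton, card_singleton]
    exact card_pos.2 ⟨1, mem_filter.2 ⟨h1, le_rfl⟩⟩
  · rw [card_pair h] at hv ⊢
    refine le_trans (le_of_eq (card_pair (by decide : (1 : ℕ) ≠ 2)).symm) (card_le_card ?_)
    simp [insert_subset_iff, h1, hv]

variable [DecidableEq α]

theorem tailColours_insert_subset (hsymm : ∀ u w, ec u w = ec w u) (v : α) (S : Finset α) :
    𝒞 (insert v S) ⊆ 𝒞 S ∪ insert (cv v) (S.image (ec v)) := by
  intro c hc
  simp only [mem_union, mem_insert, mem_image]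
  rcases mem_tailColours.1 hc with rfl | ⟨u, hu, rfl⟩ | ⟨u, hu, w, hw, huw, rfl⟩
  · exact .inl (self_mem_tailColours S)
  · rcases mem_insert.1 hu with rfl | hu
    exacts [.inr (.inl rfl), .inl (apply_mem_tailColours hu)]
  · rcases mem_insert.1 hu with rfl | hu' <;> rcases mem_insert.1 hw with rfl | hw'
    · exact absurd rfl huw
    · exact .inr (.inr ⟨w, hw', rfl⟩)
    · exact .inr (.inr ⟨u, hu', hsymm _ _⟩)
    · exact .inl (edge_mem_tailColours hu' hw' huw)

/-- Adding `v` costs at most `#S` new edge colours, plus the colour `cv v` unless `cv v = c₀`,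
that is, unless `#(𝒞 {v}) = 1`. -/
theorem card_tailColours_insert_add_one_le (hsymm : ∀ u w, ec u w = ec w u) (v : α)
    (S : Finset α) :
    #(𝒞 (insert v S)) + 1 ≤ #(𝒞 S) + #(𝒞 {v}) + #S := by
  have hsub : 𝒞 (insert v S) ⊆ (𝒞 S ∪ 𝒞 {v}) ∪ S.image (ec v) := by
    refine (tailColours_insert_subset hsymm v S).trans fun c hc => ?_
    simp only [mem_union, mem_insert] at hc ⊢
    rcases hc with hc | rfl | hc
    exacts [.inl (.inl hc), .inl (.inr (apply_mem_tailColours (mem_singleton_self v))), .inr hc]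
  have hinter : 1 ≤ #(𝒞 S ∩ 𝒞 {v}) :=
    card_pos.2 ⟨c₀, mem_inter.2 ⟨self_mem_tailColours S, self_mem_tailColours {v}⟩⟩
  have := card_union_add_card_inter (𝒞 S) (𝒞 {v})
  grw [card_le_card hsub, card_union_le, card_image_le]
  omega

theorem card_tailColours_insert_le_of_forall_insert_le (hsymm : ∀ u w, ec u w = ec w u) {v : α}
    {W T : Finset α} (hWT : W ⊆ T) (hv : v ∉ T)
    (hstuck : ∀ u ∈ T, u ∉ W → #(𝒞 (insert u (insert v W))) ≤ #(𝒞 (insert v W))) :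
    #(𝒞 (insert v T)) ≤ #(𝒞 T) + #W + 1 := by
  have hedge : ∀ u ∈ T, ec v u ∈ 𝒞 (insert v W) := by
    intro u hu
    have hvu : v ≠ u := fun h => hv (h ▸ hu)
    by_cases huW : u ∈ W
    · exact edge_mem_tailColours (mem_insert_self v W) (mem_insert_of_mem huW) hvu
    · have hsub : 𝒞 (insert v W) ⊆ 𝒞 (insert u (insert v W)) :=
        tailColours_mono (subset_insert _ _)
      rw [eq_of_subset_of_card_le hsub (hstuck u hu huW)]
      exact edge_mem_tailColours (mem_insert_of_mem (mem_insert_self v W)) (mem_insert_self _ _)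
        hvu
  have hsub : 𝒞 (insert v T) ⊆ 𝒞 T ∪ 𝒞 (insert v W) := by
    refine (tailColours_insert_subset hsymm v T).trans (union_subset_union_right ?_)
    refine insert_subset (apply_mem_tailColours (mem_insert_self v W)) ?_
    exact image_subset_iff.2 hedge
  have hinter : 𝒞 W ⊆ 𝒞 T ∩ 𝒞 (insert v W) :=
    subset_inter (tailColours_mono hWT) (tailColours_mono (subset_insert v W))
  have := card_union_add_card_inter (𝒞 T) (𝒞 (insert v W))
  have := card_le_card hinter
  have := card_le_card hsub
  have : #(𝒞 (insert v W)) + 1 ≤ #(𝒞 W) + #(𝒞 {v}) + #W :=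
    card_tailColours_insert_add_one_le hsymm v W
  have : #(𝒞 {v}) ≤ 2 := card_tailColours_singleton_le v
  omega

/-- Were there no value in `(g, g + j]`, `j = #{m ∈ G | m ≤ g}`, take a maximal `W ⊆ T` with
`#(𝒞 (insert v W)) ≤ g` and at least `#W + #(𝒞 {v})` values of `G` up to `#(𝒞 (insert v W))`.
If no `u ∈ T \ W` enlarges `𝒞 (insert v W)`, then `insert v T` has at most `#W + 1 ≤ j` more
colours than `T`. If some `u` does, maximality makes it jump past `g`, yet it has at most
`#(insert u W) + #(𝒞 {v}) - 1 ≤ j` more colours than `insert u W ⊆ T`. -/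
theorem exists_card_tailColours_mem_Ioc (hsymm : ∀ u w, ec u w = ec w u) {G : Finset ℕ}
    (hG : ∀ S, #(𝒞 S) ∈ G) {g : ℕ} {T : Finset α} {v : α} (hv : v ∉ T)
    (hT : #(𝒞 T) ≤ g) (hvT : g < #(𝒞 (insert v T))) :
    ∃ S, #(𝒞 S) ∈ Set.Ioc g (g + #{m ∈ G | m ≤ g}) := by
  set j := #{m ∈ G | m ≤ g}
  by_contra! hnone
  have hgap : ∀ S, g < #(𝒞 S) → g + j < #(𝒞 S) := fun S h => not_le.1 fun h' => hnone S ⟨h, h'⟩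
  have hcount : ∀ W, #(𝒞 (insert v W)) ≤ g → #{m ∈ G | m ≤ #(𝒞 (insert v W))} ≤ j :=
    fun W hW => card_le_card (monotone_filter_right G fun m _ hm => hm.trans hW)
  have hg : 1 ≤ g := (card_pos.2 ⟨c₀, self_mem_tailColours T⟩).trans_le hT
  have hj : 1 ≤ j := card_pos.2 ⟨1, mem_filter.2 ⟨by simpa using hG ∅, hg⟩⟩
  let good := T.powerset.filter fun W =>
    #(𝒞 (insert v W)) ≤ g ∧ #W + #(𝒞 {v}) ≤ #{m ∈ G | m ≤ #(𝒞 (insert v W))}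
  have hempty : ∅ ∈ good := by
    have hv : #(𝒞 {v}) ≤ g := by
      by_contra! h
      have := hgap _ h
      have := card_tailColours_singleton_le (c₀ := c₀) (cv := cv) (ec := ec) v
      omega
    simpa [good, hv] using le_card_filter_card_tailColours_singleton hG v
  obtain ⟨W, hW, hWmax⟩ := exists_max_image good card ⟨∅, hempty⟩
  obtain ⟨hWT, hWg, hWcount⟩ : W ⊆ T ∧ _ ∧ _ := by simpa [good] using hW
  have hfv : 1 ≤ #(𝒞 {v}) := card_pos.2 ⟨c₀, self_mem_tailColours _⟩
  by_cases hstuck : ∀ u ∈ T, u ∉ W → #(𝒞 (insert u (insert v W))) ≤ #(𝒞 (insert v W))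
  · have := card_tailColours_insert_le_of_forall_insert_le hsymm hWT hv hstuck
    have := hgap _ hvT
    have := hcount W hWg
    omega
  push Not at hstuck
  obtain ⟨u, huT, huW, hup⟩ := hstuck
  rw [insert_comm] at hup
  have huW' : #(insert u W) = #W + 1 := card_insert_of_notMem huW
  by_cases hug : #(𝒞 (insert v (insert u W))) ≤ g
  · have : insert u W ∈ good := by
      refine mem_filter.2 ⟨mem_powerset.2 (insert_subset huT hWT), hug, ?_⟩
      have := card_filter_le_lt hup (hG (insert v (insert u W)))
      omega
    have := hWmax _ this
    omega
  · have := hgap _ (not_le.1 hug)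
    have : #(𝒞 (insert v (insert u W))) + 1 ≤ #(𝒞 (insert u W)) + #(𝒞 {v}) + #(insert u W) :=
      card_tailColours_insert_add_one_le hsymm v (insert u W)
    have := (card_le_card (tailColours_mono (insert_subset huT hWT))).trans hT
    have := hcount W hWg
    omega

end TailColours

def HasBoundedGaps (G : Finset ℕ) (k : ℕ) : Prop :=
  ∀ g ∈ G, g < k → ∃ g' ∈ G, g < g' ∧ g' ≤ g + #{m ∈ G | m ≤ g}

namespace HasBoundedGaps

variable {G : Finset ℕ} {k : ℕ}

/-- With `c` values of `G` up to `g`, this says `g ≤ 1 + c (c - 1) / 2`. -/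
theorem two_mul_add_card_le (hG : HasBoundedGaps G k) (h1 : 1 ∈ G) {g : ℕ} (hg : g ∈ G)
    (hgk : g ≤ k) : 2 * g + #{m ∈ G | m ≤ g} ≤ 2 + #{m ∈ G | m ≤ g} ^ 2 := by
  induction g using Nat.strong_induction_on with
  | _ g ih =>
  set c := #{m ∈ G | m ≤ g}
  have hc : 1 ≤ c := card_pos.2 ⟨g, mem_filter.2 ⟨hg, le_rfl⟩⟩
  rcases le_or_gt g 1 with hg1 | hg1
  · nlinarith
  have hne : ({m ∈ G | m < g}).Nonempty := ⟨1, mem_filter.2 ⟨h1, hg1⟩⟩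
  obtain ⟨hg₀G, hg₀g⟩ := mem_filter.1 (max'_mem _ hne)
  set g₀ := ({m ∈ G | m < g}).max' hne
  obtain ⟨g', hg'G, hg₀g', hg'⟩ := hG g₀ hg₀G (hg₀g.trans_le hgk)
  have hgg' : g ≤ g' := by
    by_contra! h
    exact (le_max' _ g' (mem_filter.2 ⟨hg'G, h⟩)).not_gt hg₀g'
  have hc₀ : #{m ∈ G | m ≤ g₀} < c := card_filter_le_lt hg₀g hg
  have := ih g₀ hg₀g hg₀G (hg₀g.le.trans hgk)
  nlinarith

theorem le_card (hG : HasBoundedGaps G k) (h1 : 1 ∈ G) (hk : k ∈ G) {n : ℕ}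
    (h₁ : n * (n - 1) / 2 + 1 ≤ k) : n ≤ #G := by
  have hbound := hG.two_mul_add_card_le h1 hk le_rfl
  set t := #{m ∈ G | m ≤ k}
  have ht : t ≤ #G := card_filter_le _ _
  have ht1 : 1 ≤ t := card_pos.2 ⟨k, mem_filter.2 ⟨hk, le_rfl⟩⟩
  by_contra! hn
  have htn : (t + 1) * t ≤ n * (n - 1) := Nat.mul_le_mul (by omega) (by omega)
  have := Nat.lt_div_mul_add (a := n * (n - 1)) two_pos
  nlinarith

end HasBoundedGaps

theorem edgeCol_comm (Δ : ℕ → ℕ → ℕ) (x y : ℕ) : edgeCol Δ x y = edgeCol Δ y x := by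
  simp only [edgeCol, min_comm, max_comm]

theorem colourSet_subset_Icc {Δ : ℕ → ℕ → ℕ} {k : ℕ}
    (hcol : ∀ x y, x ≠ y → edgeCol Δ x y ∈ Finset.Icc 1 k) (X : Set ℕ) :
    colourSet Δ X ⊆ ↑(Finset.Icc 1 k) := by
  rintro _ ⟨x, -, y, -, hxy, rfl⟩
  exact hcol x y hxy

theorem colourSet_union_eq_tailColours {Δ : ℕ → ℕ → ℕ} {c₀ : ℕ} {cv : ℕ → ℕ} {S : Finset ℕ}
    {T : Set ℕ} (hT : T.Nontrivial) (hTc : T.Pairwise fun x y => edgeCol Δ x y = c₀)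
    (hST : ∀ x ∈ S, ∀ y ∈ T, x ≠ y ∧ edgeCol Δ x y = cv x) :
    colourSet Δ (↑S ∪ T) = ↑(tailColours c₀ cv (edgeCol Δ) S) := by
  ext c
  simp only [colourSet, Set.mem_union, Finset.mem_coe, mem_tailColours]
  constructor
  · rintro ⟨x, hx | hx, y, hy | hy, hxy, rfl⟩
    · exact .inr (.inr ⟨x, hx, y, hy, hxy, rfl⟩)
    · exact .inr (.inl ⟨x, hx, ((hST x hx y hy).2).symm⟩)
    · exact .inr (.inl ⟨y, hy, (edgeCol_comm Δ x y ▸ (hST y hy x hx).2).symm⟩)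
    · exact .inl (hTc hx hy hxy)
  · rintro (rfl | ⟨x, hx, rfl⟩ | ⟨x, hx, y, hy, hxy, rfl⟩)
    · obtain ⟨x, hx, y, hy, hxy⟩ := hT
      exact ⟨x, .inr hx, y, .inr hy, hxy, hTc hx hy hxy⟩
    · obtain ⟨y, hy⟩ := hT.nonempty
      exact ⟨x, .inl hx, y, .inr hy, (hST x hx y hy).1, (hST x hx y hy).2⟩
    · exact ⟨x, .inl hx, y, .inl hy, hxy, rfl⟩

theorem exists_hasBoundedGaps_subset_FSet {Δ : ℕ → ℕ → ℕ} {k : ℕ} (hΔ : IsColouring Δ k) :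
    ∃ G : Finset ℕ, ↑G ⊆ FSet Δ k ∧ 1 ∈ G ∧ k ∈ G ∧ HasBoundedGaps G k := by
  classical
  obtain ⟨hcol, hsurj⟩ := hΔ
  obtain ⟨c₀, cv, htail⟩ :=
    exists_monochromatic_tail (edgeCol_comm Δ) (Finset.Icc 1 k).finite_toSet hcol
  set f := tailColours c₀ cv (edgeCol Δ)
  have hf : ∀ S, ∃ X : Set ℕ, X.Infinite ∧ colourSet Δ X = ↑(f S) := fun S =>
    let ⟨T, hT, hTc, hST⟩ := htail S
    ⟨↑S ∪ T, hT.mono Set.subset_union_right, colourSet_union_eq_tailColours hT.nontrivial hTc hST⟩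
  have hfk : ∀ S, f S ⊆ Finset.Icc 1 k := fun S => by
    obtain ⟨X, -, hX⟩ := hf S
    exact Finset.coe_subset.1 (hX ▸ colourSet_subset_Icc hcol X)
  obtain ⟨S₁, hS₁⟩ := exists_subset_tailColours (c₀ := c₀) (cv := cv) (Finset.Icc 1 k)
    fun c hc => hsurj c hc
  have hS₁k : #(f S₁) = k := by
    rw [(hfk S₁).antisymm hS₁, Nat.card_Icc, Nat.add_sub_cancel]
  let G := {m ∈ Finset.Icc 1 k | ∃ S, #(f S) = m}
  have hG : ∀ S, #(f S) ∈ G := fun S => mem_filter.2 ⟨mem_Icc.2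
    ⟨card_pos.2 ⟨c₀, self_mem_tailColours S⟩, by simpa using card_le_card (hfk S)⟩, S, rfl⟩
  refine ⟨G, ?_, by simpa [f] using hG ∅, hS₁k ▸ hG S₁, ?_⟩
  · rintro m hm
    obtain ⟨hmk, S, rfl⟩ := mem_filter.1 hm
    obtain ⟨X, hX, hXS⟩ := hf S
    exact ⟨hmk, X, hX, by rw [hXS, Set.ncard_coe_finset]⟩
  · rintro _ hg hgk
    obtain ⟨-, S, rfl⟩ := mem_filter.1 hg
    obtain ⟨T, v, hv, hT, hvT⟩ := exists_le_lt_insert_of_lt_union (fun S => #(f S)) le_rfl S₁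
      (hgk.trans_le (hS₁k ▸ card_le_card (tailColours_mono subset_union_right)))
    obtain ⟨S', hS'⟩ := exists_card_tailColours_mem_Ioc (edgeCol_comm Δ) hG hv hT hvT
    exact ⟨_, hG S', hS'⟩

theorem le_ncard_FSet {Δ : ℕ → ℕ → ℕ} {k n : ℕ} (hΔ : IsColouring Δ k)
    (h₁ : n * (n - 1) / 2 + 1 ≤ k) : n ≤ (FSet Δ k).ncard := by
  obtain ⟨G, hGF, h1, hk, hgaps⟩ := exists_hasBoundedGaps_subset_FSet hΔ
  calc n ≤ #G := hgaps.le_card h1 hk h₁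
    _ = (G : Set ℕ).ncard := (Set.ncard_coe_finset G).symm
    _ ≤ (FSet Δ k).ncard :=
      Set.ncard_le_ncard hGF ((Finset.Icc 1 k).finite_toSet.subset fun _ hm => hm.1)

theorem isColouring_min {k : ℕ} (hk : 1 ≤ k) : IsColouring (fun _ b => min b k) k := by
  refine ⟨fun x y hxy => ?_, fun c hc => ⟨0, c, ?_, ?_⟩⟩
  · simp only [edgeCol, Finset.mem_Icc]
    omega
  · simp only [Finset.mem_Icc] at hc
    omega
  · simp only [edgeCol, Finset.mem_Icc] at hc ⊢
    omega

theorem exactly_mColoured_lower_bound_general (k n : ℕ)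
    (h₁ : n * (n - 1) / 2 + 1 ≤ k) :
    (∀ Δ : ℕ → ℕ → ℕ, IsColouring Δ k → n ≤ (FSet Δ k).ncard) ∧ n ≤ psi k := by
  have hbound : ∀ Δ, IsColouring Δ k → n ≤ (FSet Δ k).ncard := fun Δ hΔ => le_ncard_FSet hΔ h₁
  refine ⟨hbound, le_csInf ⟨_, _, isColouring_min (by omega), rfl⟩ ?_⟩
  rintro _ ⟨Δ, hΔ, rfl⟩
  exact hbound Δ hΔ

/-- **Theorem 1.** If `n ≥ 2` is the largest natural number with `k ≥ n(n-1)/2 + 1`, then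
every surjective colouring `Δ : ℕ^(2) ↠ [k]` satisfies `|F_Δ| ≥ n`; equivalently `ψ(k) ≥ n`. -/
theorem exactly_mColoured_lower_bound (k n : ℕ) (hk : 2 ≤ k) (hn : 2 ≤ n)
    (h₁ : n * (n - 1) / 2 + 1 ≤ k)
    (hmax : ∀ m : ℕ, m * (m - 1) / 2 + 1 ≤ k → m ≤ n) :
    (∀ Δ : ℕ → ℕ → ℕ, IsColouring Δ k → n ≤ (FSet Δ k).ncard) ∧ n ≤ psi k :=
  exactly_mColoured_lower_bound_general k n h₁
end

section
/- Let Δ : ℕ^(2) ↠ [k] be a surjective colouring and suppose n is a natural number such that k ≥ 2^n + 1. Then F_Δ ∩ ([2^(n+1)] \ [2^n]) ≠ ∅, i.e., there exists m ∈ F_Δ with 2^n < m ≤ 2^(n+1). -/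
namespace FMDaux

open Finset

lemma edgeCol_comm (Δ : ℕ → ℕ → ℕ) (x y : ℕ) : edgeCol Δ x y = edgeCol Δ y x := by
  unfold edgeCol; rw [min_comm, max_comm]

/-- The colour bookkeeping set of a configuration: reservoir colour `e`,
the attachment colours `d v` for `v ∈ S`, and colours of edges inside `S`. -/
noncomputable def Tset (Δ : ℕ → ℕ → ℕ) (d : ℕ → ℕ) (e : ℕ) (S : Finset ℕ) : Finset ℕ :=
  insert e (S.image d ∪ S.offDiag.image (fun p => edgeCol Δ p.1 p.2))

lemma Tset_mono (Δ : ℕ → ℕ → ℕ) (d : ℕ → ℕ) (e : ℕ) {S₁ S₂ : Finset ℕ} (h : S₁ ⊆ S₂) :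
    Tset Δ d e S₁ ⊆ Tset Δ d e S₂ := by
  unfold Tset
  exact Finset.insert_subset_insert _ (Finset.union_subset_union
    (Finset.image_subset_image h) (Finset.image_subset_image (Finset.offDiag_mono h)))

/-- Configuration invariant: `R` is an infinite monochromatic (colour `e`) reservoir,
`V` a finite attached set disjoint from `R`, every `v ∈ V` joined monochromatically
(colour `d v`) to all of `R`. -/
structure Inv (Δ : ℕ → ℕ → ℕ) (V : Finset ℕ) (R : Set ℕ) (d : ℕ → ℕ) (e : ℕ) : Prop where
  hR : R.Infinite
  hmono : ∀ x ∈ R, ∀ y ∈ R, x ≠ y → edgeCol Δ x y = e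
  hdisj : ∀ v ∈ V, v ∉ R
  hd : ∀ v ∈ V, ∀ x ∈ R, edgeCol Δ v x = d v

variable {Δ : ℕ → ℕ → ℕ} {k : ℕ}

lemma exists_fiber (R : Set ℕ) (hR : R.Infinite) (f : ℕ → ℕ)
    (hf : ∀ x ∈ R, f x ∈ Finset.Icc 1 k) : ∃ c, (R ∩ f ⁻¹' {c}).Infinite := by
  by_contra h
  push_neg at h
  have hsub : R ⊆ ⋃ c ∈ (Finset.Icc 1 k : Finset ℕ), (R ∩ f ⁻¹' {c}) := fun x hx =>
    Set.mem_biUnion (hf x hx) ⟨hx, rfl⟩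
  exact hR (((Finset.Icc 1 k).finite_toSet.biUnion (fun c _ => h c)).subset hsub)

lemma attach_vertex (hcol : IsColouring Δ k) {R : Set ℕ} {e : ℕ} (hR : R.Infinite)
    (hmono : ∀ x ∈ R, ∀ y ∈ R, x ≠ y → edgeCol Δ x y = e) (b : ℕ) :
    ∃ dv R', R' ⊆ R ∧ R'.Infinite ∧ b ∉ R' ∧ ∀ x ∈ R', edgeCol Δ b x = dv := by
  by_cases hb : b ∈ R
  · refine ⟨e, R \ {b}, Set.diff_subset, hR.diff (Set.finite_singleton b),
      fun h => h.2 rfl, ?_⟩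
    intro x hx
    exact hmono b hb x hx.1 (fun h => hx.2 h.symm)
  · have hf : ∀ x ∈ R, edgeCol Δ b x ∈ Finset.Icc 1 k := by
      intro x hx
      have hbx : b ≠ x := by rintro rfl; exact hb hx
      exact hcol.1 b x hbx
    obtain ⟨c, hc⟩ := exists_fiber (k := k) R hR (edgeCol Δ b) hf
    exact ⟨c, R ∩ (edgeCol Δ b) ⁻¹' {c}, Set.inter_subset_left, hc,
      fun h => hb h.1, fun x hx => hx.2⟩

lemma ramsey_step (hcol : IsColouring Δ k) (A : Set ℕ) (hA : A.Infinite) :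
    ∃ (a c : ℕ) (B : Set ℕ), a ∈ A ∧ B ⊆ A ∧ B.Infinite ∧ a ∉ B ∧
      (∀ x ∈ B, edgeCol Δ a x = c) ∧ c ∈ Finset.Icc 1 k := by
  obtain ⟨a, ha⟩ := hA.nonempty
  have hA' : (A \ {a}).Infinite := hA.diff (Set.finite_singleton a)
  have hf : ∀ x ∈ A \ {a}, edgeCol Δ a x ∈ Finset.Icc 1 k := by
    intro x hx
    have hax : a ≠ x := by rintro rfl; exact hx.2 rfl
    exact hcol.1 a x hax
  obtain ⟨c, hc⟩ := exists_fiber (k := k) _ hA' (edgeCol Δ a) hf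
  obtain ⟨x₀, hx₀⟩ := hc.nonempty
  refine ⟨a, c, (A \ {a}) ∩ (edgeCol Δ a) ⁻¹' {c},
    ha, fun x hx => hx.1.1, hc, fun h => h.1.2 rfl, fun x hx => hx.2, ?_⟩
  have hax : a ≠ x₀ := by rintro rfl; exact hx₀.1.2 rfl
  have := hcol.1 a x₀ hax
  rwa [hx₀.2] at this

noncomputable def rnext (hcol : IsColouring Δ k) (A : {A : Set ℕ // A.Infinite}) :
    ℕ × ℕ × {A : Set ℕ // A.Infinite} :=
  let h := ramsey_step hcol A.1 A.2
  ⟨h.choose, h.choose_spec.choose,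
    ⟨h.choose_spec.choose_spec.choose, h.choose_spec.choose_spec.choose_spec.2.2.1⟩⟩

lemma rnext_spec (hcol : IsColouring Δ k) (A : {A : Set ℕ // A.Infinite}) :
    (rnext hcol A).1 ∈ A.1 ∧ ((rnext hcol A).2.2 : Set ℕ) ⊆ A.1 ∧
      (rnext hcol A).1 ∉ ((rnext hcol A).2.2 : Set ℕ) ∧
      (∀ x ∈ ((rnext hcol A).2.2 : Set ℕ), edgeCol Δ (rnext hcol A).1 x = (rnext hcol A).2.1) ∧
      (rnext hcol A).2.1 ∈ Finset.Icc 1 k := by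
  have h := (ramsey_step hcol A.1 A.2).choose_spec.choose_spec.choose_spec
  exact ⟨h.1, h.2.1, h.2.2.2.1, h.2.2.2.2.1, h.2.2.2.2.2⟩

noncomputable def rseq (hcol : IsColouring Δ k) : ℕ → {A : Set ℕ // A.Infinite} :=
  fun i => Nat.rec ⟨Set.univ, Set.infinite_univ⟩ (fun _ A => (rnext hcol A).2.2) i

lemma rseq_succ (hcol : IsColouring Δ k) (i : ℕ) :
    rseq hcol (i + 1) = (rnext hcol (rseq hcol i)).2.2 := rfl

/-- infinite monochromatic set -/
lemma exists_mono (hcol : IsColouring Δ k) :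
    ∃ (e : ℕ) (R : Set ℕ), R.Infinite ∧ ∀ x ∈ R, ∀ y ∈ R, x ≠ y → edgeCol Δ x y = e := by
  classical
  set a : ℕ → ℕ := fun i => (rnext hcol (rseq hcol i)).1 with ha
  set c : ℕ → ℕ := fun i => (rnext hcol (rseq hcol i)).2.1 with hcdef
  have hsub : ∀ i, ((rseq hcol (i+1)) : Set ℕ) ⊆ (rseq hcol i : Set ℕ) := fun i =>
    (rnext_spec hcol (rseq hcol i)).2.1
  have hmem : ∀ i, a i ∈ (rseq hcol i : Set ℕ) := fun i => (rnext_spec hcol (rseq hcol i)).1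
  have hnotmem : ∀ i, a i ∉ ((rseq hcol (i+1)) : Set ℕ) := fun i =>
    (rnext_spec hcol (rseq hcol i)).2.2.1
  have hcol' : ∀ i, ∀ x ∈ ((rseq hcol (i+1)) : Set ℕ), edgeCol Δ (a i) x = c i := fun i =>
    (rnext_spec hcol (rseq hcol i)).2.2.2.1
  have hicc : ∀ i, c i ∈ Finset.Icc 1 k := fun i => (rnext_spec hcol (rseq hcol i)).2.2.2.2
  have hchain : ∀ i j, i < j → (rseq hcol j : Set ℕ) ⊆ (rseq hcol (i+1) : Set ℕ) := by
    intro i j hij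
    induction j with
    | zero => omega
    | succ m ih =>
      rcases Nat.lt_succ_iff_lt_or_eq.mp hij with h | h
      · exact (hsub m).trans (ih h)
      · subst h; exact subset_rfl
  have hane : ∀ i j, i < j → a i ≠ a j := by
    intro i j hij h
    exact hnotmem i (h ▸ hchain i j hij (hmem j))
  have haedge : ∀ i j, i < j → edgeCol Δ (a i) (a j) = c i := fun i j hij =>
    hcol' i (a j) (hchain i j hij (hmem j))
  -- pigeonhole on colours
  have : ∃ y : {x // x ∈ Finset.Icc 1 k}, ((fun i => (⟨c i, hicc i⟩ : {x // x ∈ Finset.Icc 1 k})) ⁻¹' {y}).Infinite := by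
    obtain ⟨y, hy⟩ := Finite.exists_infinite_fiber
      (fun i => (⟨c i, hicc i⟩ : {x // x ∈ Finset.Icc 1 k}))
    exact ⟨y, Set.infinite_coe_iff.mp hy⟩
  obtain ⟨y, hy⟩ := this
  set I : Set ℕ := (fun i => (⟨c i, hicc i⟩ : {x // x ∈ Finset.Icc 1 k})) ⁻¹' {y} with hI
  have hcI : ∀ i ∈ I, c i = y.1 := by
    intro i hi
    have : (⟨c i, hicc i⟩ : {x // x ∈ Finset.Icc 1 k}) = y := hi
    exact congrArg Subtype.val this
  have hinj : Set.InjOn a I := by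
    intro i hi j hj h
    by_contra hne
    rcases Nat.lt_or_ge i j with hlt | hge
    · exact hane i j hlt h
    · exact hane j i (by omega) h.symm
  refine ⟨y.1, a '' I, hy.image hinj, ?_⟩
  rintro x ⟨i, hi, rfl⟩ z ⟨j, hj, rfl⟩ hne
  have hij : i ≠ j := fun h => hne (by rw [h])
  rcases Nat.lt_or_ge i j with hlt | hge
  · rw [haedge i j hlt, hcI i hi]
  · rw [edgeCol_comm, haedge j i (by omega), hcI j hj]

lemma Tset_subset_Icc (hcol : IsColouring Δ k) {V : Finset ℕ} {R : Set ℕ} {d : ℕ → ℕ} {e : ℕ}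
    (h : Inv Δ V R d e) : Tset Δ d e V ⊆ Finset.Icc 1 k := by
  intro x hx
  rw [Tset, Finset.mem_insert, Finset.mem_union] at hx
  obtain ⟨u, hu, w, hw, huw⟩ : ∃ u ∈ R, ∃ w ∈ R, u ≠ w := by
    obtain ⟨u, hu, w, hw, huw⟩ := h.hR.nontrivial
    exact ⟨u, hu, w, hw, huw⟩
  rcases hx with rfl | hx | hx
  · rw [← h.hmono u hu w hw huw]; exact hcol.1 u w huw
  · obtain ⟨v, hv, rfl⟩ := Finset.mem_image.mp hx
    have hvu : v ≠ u := fun hh => h.hdisj v hv (hh ▸ hu)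
    rw [← h.hd v hv u hu]; exact hcol.1 v u hvu
  · obtain ⟨p, hp, rfl⟩ := Finset.mem_image.mp hx
    obtain ⟨_, _, hne⟩ := Finset.mem_offDiag.mp hp
    exact hcol.1 _ _ hne

lemma colourSet_eq {V : Finset ℕ} {R : Set ℕ} {d : ℕ → ℕ} {e : ℕ}
    (h : Inv Δ V R d e) : colourSet Δ (↑V ∪ R) = ↑(Tset Δ d e V) := by
  ext col
  constructor
  · rintro ⟨x, hx, y, hy, hxy, rfl⟩
    rw [Finset.mem_coe, Tset, Finset.mem_insert, Finset.mem_union]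
    rcases hx with hx | hx <;> rcases hy with hy | hy
    · right; right
      have hpd : (x, y) ∈ V.offDiag :=
        Finset.mem_offDiag.mpr ⟨Finset.mem_coe.mp hx, Finset.mem_coe.mp hy, hxy⟩
      exact Finset.mem_image_of_mem (fun p => edgeCol Δ p.1 p.2) hpd
    · right; left
      exact Finset.mem_image.mpr ⟨x, Finset.mem_coe.mp hx, (h.hd x (Finset.mem_coe.mp hx) y hy).symm⟩
    · right; left
      refine Finset.mem_image.mpr ⟨y, Finset.mem_coe.mp hy, ?_⟩
      rw [edgeCol_comm]
      exact (h.hd y (Finset.mem_coe.mp hy) x hx).symm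
    · left; exact h.hmono x hx y hy hxy
  · intro hc
    rw [Finset.mem_coe, Tset, Finset.mem_insert, Finset.mem_union] at hc
    rcases hc with rfl | hc | hc
    · obtain ⟨u, hu, w, hw, huw⟩ := h.hR.nontrivial
      exact ⟨u, Or.inr hu, w, Or.inr hw, huw, h.hmono u hu w hw huw⟩
    · obtain ⟨v, hv, rfl⟩ := Finset.mem_image.mp hc
      obtain ⟨x, hx⟩ := h.hR.nonempty
      exact ⟨v, Or.inl hv, x, Or.inr hx, fun hh => h.hdisj v hv (hh ▸ hx), h.hd v hv x hx⟩
    · obtain ⟨p, hp, rfl⟩ := Finset.mem_image.mp hc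
      obtain ⟨h1, h2, hne⟩ := Finset.mem_offDiag.mp hp
      exact ⟨p.1, Or.inl h1, p.2, Or.inl h2, hne, rfl⟩


lemma Tset_empty (d : ℕ → ℕ) (e : ℕ) : Tset Δ d e ∅ = {e} := by
  simp [Tset]

lemma crossing {n : ℕ} (d : ℕ → ℕ) (e : ℕ) (S : Finset ℕ)
    (hτ : 2 ^ (n + 1) < (Tset Δ d e S).card) :
    ∃ v ∈ S, 2 ^ n < (Tset Δ d e (S.erase v)).card := by
  classical
  by_contra hcon
  push_neg at hcon
  set w := 2 ^ n with hw
  have hw1 : 1 ≤ w := Nat.one_le_two_pow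
  have hpow : 2 ^ (n + 1) = 2 * w := by rw [hw, pow_succ]; ring
  set T := Tset Δ d e S with hT
  set q := S.card with hq
  set D := (S.image d) \ {e} with hD
  set P := T \ insert e (S.image d) with hP
  have hsub1 : insert e (S.image d) ⊆ T := by
    rw [hT]
    unfold Tset
    intro x hx
    rcases Finset.mem_insert.mp hx with rfl | hx
    · exact Finset.mem_insert_self _ _
    · exact Finset.mem_insert_of_mem (Finset.mem_union_left _ hx)
  have hTeq : insert e (S.image d) ∪ P = T := Finset.union_sdiff_of_subset hsub1
  have hinsD : insert e (S.image d) = insert e D := by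
    ext x
    simp only [Finset.mem_insert, hD, Finset.mem_sdiff, Finset.mem_singleton]
    constructor
    · rintro (rfl | hx)
      · exact Or.inl rfl
      · by_cases hxe : x = e
        · exact Or.inl hxe
        · exact Or.inr ⟨hx, hxe⟩
    · rintro (rfl | ⟨hx, _⟩)
      · exact Or.inl rfl
      · exact Or.inr hx
  have heD : e ∉ D := by simp [hD]
  have hdisj : Disjoint (insert e (S.image d)) P := Finset.disjoint_sdiff
  have hcardT : T.card = 1 + D.card + P.card := by
    rw [← hTeq, Finset.card_union_of_disjoint hdisj, hinsD,
      Finset.card_insert_of_notMem heD]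
    omega
  have hPoff : ∀ c ∈ P, ∃ p ∈ S.offDiag, edgeCol Δ p.1 p.2 = c := by
    intro c hc
    rw [hP, Finset.mem_sdiff] at hc
    obtain ⟨hcT, hcn⟩ := hc
    rw [hT] at hcT
    unfold Tset at hcT
    rw [Finset.mem_insert, Finset.mem_union] at hcT
    rcases hcT with rfl | hcT | hcT
    · exact absurd (Finset.mem_insert_self _ _) hcn
    · exact absurd (Finset.mem_insert_of_mem hcT) hcn
    · obtain ⟨p, hp, rfl⟩ := Finset.mem_image.mp hcT
      exact ⟨p, hp, rfl⟩
  have hPcard : P.card ≤ q * q - q := by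
    have hss : P ⊆ S.offDiag.image (fun p => edgeCol Δ p.1 p.2) := by
      intro c hc
      obtain ⟨p, hp, hpc⟩ := hPoff c hc
      exact Finset.mem_image.mpr ⟨p, hp, hpc⟩
    calc P.card ≤ (S.offDiag.image (fun p => edgeCol Δ p.1 p.2)).card :=
          Finset.card_le_card hss
      _ ≤ S.offDiag.card := Finset.card_image_le
      _ = q * q - q := by rw [hq]; exact Finset.offDiag_card _
  have hDcard : D.card ≤ q := le_trans (Finset.card_le_card Finset.sdiff_subset)
    Finset.card_image_le
  have hswap : ∑ v ∈ S, (T \ Tset Δ d e (S.erase v)).card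
      = ∑ c ∈ T, (S.filter (fun v => c ∉ Tset Δ d e (S.erase v))).card := by
    have h1 : ∀ v, (T \ Tset Δ d e (S.erase v)).card
        = ∑ c ∈ T, if c ∉ Tset Δ d e (S.erase v) then 1 else 0 := by
      intro v
      rw [Finset.sdiff_eq_filter, Finset.card_filter]
    have h2 : ∀ c, (S.filter (fun v => c ∉ Tset Δ d e (S.erase v))).card
        = ∑ v ∈ S, if c ∉ Tset Δ d e (S.erase v) then 1 else 0 := fun c =>
      Finset.card_filter _ _
    simp only [h1, h2]
    exact Finset.sum_comm
  have hwe : (S.filter (fun v => (e : ℕ) ∉ Tset Δ d e (S.erase v))).card = 0 := by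
    rw [Finset.card_eq_zero, Finset.filter_eq_empty_iff]
    intro v _
    exact fun hcon' => hcon' (Finset.mem_insert_self _ _)
  have hwD : ∀ c ∈ D, (S.filter (fun v => c ∉ Tset Δ d e (S.erase v))).card ≤ 1 := by
    intro c hc
    rw [hD, Finset.mem_sdiff] at hc
    obtain ⟨hc1, _⟩ := hc
    obtain ⟨u, hu, rfl⟩ := Finset.mem_image.mp hc1
    have hss : S.filter (fun v => d u ∉ Tset Δ d e (S.erase v)) ⊆ {u} := by
      intro v hv
      obtain ⟨hvS, hvn⟩ := Finset.mem_filter.mp hv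
      rw [Finset.mem_singleton]
      by_contra hvu
      have hmem : u ∈ S.erase v := Finset.mem_erase.mpr ⟨fun h => hvu h.symm, hu⟩
      exact hvn (Finset.mem_insert_of_mem (Finset.mem_union_left _
        (Finset.mem_image_of_mem d hmem)))
    calc _ ≤ ({u} : Finset ℕ).card := Finset.card_le_card hss
      _ = 1 := Finset.card_singleton u
  have hwP : ∀ c ∈ P, (S.filter (fun v => c ∉ Tset Δ d e (S.erase v))).card ≤ 2 := by
    intro c hc
    obtain ⟨p, hp, hpc⟩ := hPoff c hc
    obtain ⟨hp1, hp2, hpne⟩ := Finset.mem_offDiag.mp hp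
    have hss : S.filter (fun v => c ∉ Tset Δ d e (S.erase v)) ⊆ {p.1, p.2} := by
      intro v hv
      obtain ⟨hvS, hvn⟩ := Finset.mem_filter.mp hv
      rw [Finset.mem_insert, Finset.mem_singleton]
      by_contra hvp
      push_neg at hvp
      have hmem : p ∈ (S.erase v).offDiag := Finset.mem_offDiag.mpr
        ⟨Finset.mem_erase.mpr ⟨fun h => hvp.1 h.symm, hp1⟩,
         Finset.mem_erase.mpr ⟨fun h => hvp.2 h.symm, hp2⟩, hpne⟩
      exact hvn (Finset.mem_insert_of_mem (Finset.mem_union_right _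
        (hpc ▸ Finset.mem_image_of_mem (fun p => edgeCol Δ p.1 p.2) hmem)))
    calc _ ≤ ({p.1, p.2} : Finset ℕ).card := Finset.card_le_card hss
      _ ≤ 2 := Finset.card_insert_le _ _
  have hdisj2 : Disjoint (insert e D) P := hinsD ▸ hdisj
  have hkey : ∑ v ∈ S, (T \ Tset Δ d e (S.erase v)).card ≤ D.card + 2 * P.card := by
    rw [hswap]
    have hTeq2 : T = insert e D ∪ P := by rw [← hTeq, hinsD]
    rw [hTeq2, Finset.sum_union hdisj2, Finset.sum_insert heD, hwe]
    have hb1 : ∑ c ∈ D, (S.filter (fun v => c ∉ Tset Δ d e (S.erase v))).card ≤ D.card * 1 :=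
      Finset.sum_le_card_nsmul _ _ 1 hwD
    have hb2 : ∑ c ∈ P, (S.filter (fun v => c ∉ Tset Δ d e (S.erase v))).card ≤ P.card * 2 :=
      Finset.sum_le_card_nsmul _ _ 2 hwP
    omega
  have hlow : ∀ v ∈ S, T.card ≤ w + (T \ Tset Δ d e (S.erase v)).card := by
    intro v hv
    have h1 : T.card ≤ (T \ Tset Δ d e (S.erase v)).card + (Tset Δ d e (S.erase v)).card :=
      Finset.card_le_card_sdiff_add_card
    have h2 := hcon v hv
    omega
  have hsumlow : q * T.card ≤ q * w + (D.card + 2 * P.card) := by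
    have hs := Finset.sum_le_sum hlow
    rw [Finset.sum_const, Finset.sum_add_distrib, Finset.sum_const] at hs
    simp only [smul_eq_mul] at hs
    rw [← hq] at hs
    exact le_trans hs (by omega)
  have hτ' : 2 * w < T.card := by rw [← hpow]; exact hτ
  rcases Nat.lt_or_ge q 4 with hq4 | hq4
  · -- q ∈ {0,1,2,3}
    interval_cases q
    · omega
    · omega
    · -- q = 2 : need P.card ≤ 1
      obtain ⟨u, v, huv, hSuv⟩ := Finset.card_eq_two.mp hq.symm
      have hP1 : P.card ≤ 1 := by
        have hss : P ⊆ {edgeCol Δ u v} := by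
          intro c hc
          obtain ⟨p, hp, hpc⟩ := hPoff c hc
          rw [hSuv] at hp
          obtain ⟨hp1, hp2, hpne⟩ := Finset.mem_offDiag.mp hp
          simp only [Finset.mem_insert, Finset.mem_singleton] at hp1 hp2
          rw [Finset.mem_singleton]
          rcases hp1 with h1 | h1 <;> rcases hp2 with h2 | h2
          · exact absurd (h1.trans h2.symm) hpne
          · rw [← hpc, h1, h2]
          · rw [← hpc, h1, h2, edgeCol_comm]
          · exact absurd (h1.trans h2.symm) hpne
        calc P.card ≤ ({edgeCol Δ u v} : Finset ℕ).card := Finset.card_le_card hss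
          _ = 1 := rfl
      omega
    · -- q = 3 : case on n
      have hP6 : P.card ≤ 6 := by omega
      match n, hw with
      | 0, hw => omega
      | 1, hw => omega
      | 2, hw => omega
      | (m+3), hw =>
        have h8 : 8 ≤ w := by
          rw [hw]
          calc (8 : ℕ) = 2 ^ 3 := rfl
            _ ≤ 2 ^ (m + 3) := Nat.pow_le_pow_right (by norm_num) (by omega)
        omega
  · -- q ≥ 4
    have hwT : w ≤ T.card := by omega
    have hsplit : q * T.card = q * (T.card - w) + q * w := by
      rw [← Nat.mul_add, Nat.sub_add_cancel hwT]
    have hqc : q * (T.card - w) ≤ D.card + 2 * P.card := by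
      rw [hsplit] at hsumlow
      omega
    have h4 : 4 * (T.card - w) ≤ q * (T.card - w) :=
      Nat.mul_le_mul_right _ hq4
    have hfin : 4 * (T.card - w) ≤ D.card + 2 * P.card := le_trans h4 hqc
    omega

lemma prune (d : ℕ → ℕ) (e : ℕ) (n : ℕ) :
    ∀ (q : ℕ) (S : Finset ℕ), S.card ≤ q → 2 ^ n < (Tset Δ d e S).card →
    ∃ S', S' ⊆ S ∧ 2 ^ n < (Tset Δ d e S').card ∧ (Tset Δ d e S').card ≤ 2 ^ (n + 1) := by
  intro q
  induction q with
  | zero =>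
    intro S hS hT
    rw [Finset.card_eq_zero.mp (Nat.le_zero.mp hS), Tset_empty,
      Finset.card_singleton] at hT
    have := Nat.one_le_two_pow (n := n)
    omega
  | succ q ih =>
    intro S hS hT
    by_cases hbig : (Tset Δ d e S).card ≤ 2 ^ (n + 1)
    · exact ⟨S, subset_rfl, hT, hbig⟩
    · obtain ⟨v, hv, hv2⟩ := crossing d e S (not_le.mp hbig)
      obtain ⟨S', h1, h2, h3⟩ := ih (S.erase v)
        (by have := Finset.card_erase_of_mem hv; omega) hv2
      exact ⟨S', h1.trans (Finset.erase_subset v S), h2, h3⟩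


lemma build_step (hcol : IsColouring Δ k) {V : Finset ℕ} {R : Set ℕ} {d : ℕ → ℕ} {e : ℕ}
    (hInv : Inv Δ V R d e) (hlt : (Tset Δ d e V).card < k) :
    ∃ V' R' d', Inv Δ V' R' d' e ∧
      (Tset Δ d e V).card < (Tset Δ d' e V').card := by
  classical
  have hsub : Tset Δ d e V ⊆ Finset.Icc 1 k := Tset_subset_Icc hcol hInv
  have hfresh : ∃ c' ∈ Finset.Icc 1 k, c' ∉ Tset Δ d e V := by
    by_contra hno
    push_neg at hno
    have hss : Finset.Icc 1 k ⊆ Tset Δ d e V := fun x hx => hno x hx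
    have hcc := Finset.card_le_card hss
    rw [Nat.card_Icc] at hcc
    omega
  obtain ⟨c', hc'I, hc'T⟩ := hfresh
  obtain ⟨a, b, hab, habc⟩ := hcol.2 c' hc'I
  have hstepa : ∃ da R₁, R₁ ⊆ R ∧ R₁.Infinite ∧ a ∉ R₁ ∧ (∀ x ∈ R₁, edgeCol Δ a x = da) ∧
      (a ∈ V → da = d a) := by
    by_cases haV : a ∈ V
    · exact ⟨d a, R, subset_rfl, hInv.hR, hInv.hdisj a haV,
        fun x hx => hInv.hd a haV x hx, fun _ => rfl⟩
    · obtain ⟨da, R₁, h1, h2, h3, h4⟩ := attach_vertex hcol hInv.hR hInv.hmono a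
      exact ⟨da, R₁, h1, h2, h3, h4, fun h => absurd h haV⟩
  obtain ⟨da, R₁, hR₁sub, hR₁inf, haR₁, hda, hdaV⟩ := hstepa
  have hmono₁ : ∀ x ∈ R₁, ∀ y ∈ R₁, x ≠ y → edgeCol Δ x y = e := fun x hx y hy =>
    hInv.hmono x (hR₁sub hx) y (hR₁sub hy)
  have hstepb : ∃ db R₂, R₂ ⊆ R₁ ∧ R₂.Infinite ∧ b ∉ R₂ ∧ (∀ x ∈ R₂, edgeCol Δ b x = db) ∧
      (b ∈ V → db = d b) := by
    by_cases hbV : b ∈ V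
    · exact ⟨d b, R₁, subset_rfl, hR₁inf, fun h => hInv.hdisj b hbV (hR₁sub h),
        fun x hx => hInv.hd b hbV x (hR₁sub hx), fun _ => rfl⟩
    · obtain ⟨db, R₂, h1, h2, h3, h4⟩ := attach_vertex hcol hR₁inf hmono₁ b
      exact ⟨db, R₂, h1, h2, h3, h4, fun h => absurd h hbV⟩
  obtain ⟨db, R₂, hR₂sub, hR₂inf, hbR₂, hdb, hdbV⟩ := hstepb
  set d' : ℕ → ℕ := fun v => if v = a then da else if v = b then db else d v with hd'
  set V' : Finset ℕ := insert a (insert b V) with hV'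
  have hd'V : ∀ v ∈ V, d' v = d v := by
    intro v hv
    rw [hd']
    by_cases h1 : v = a
    · subst h1
      simp only [if_pos rfl]
      exact hdaV hv
    · by_cases h2 : v = b
      · subst h2
        simp only [if_neg h1, if_pos rfl]
        exact hdbV hv
      · simp only [if_neg h1, if_neg h2]
  have hInv' : Inv Δ V' R₂ d' e := by
    refine ⟨hR₂inf,
      fun x hx y hy => hInv.hmono x (hR₁sub (hR₂sub hx)) y (hR₁sub (hR₂sub hy)), ?_, ?_⟩
    · intro v hv
      rw [hV', Finset.mem_insert, Finset.mem_insert] at hv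
      rcases hv with rfl | rfl | hv
      · exact fun h => haR₁ (hR₂sub h)
      · exact hbR₂
      · exact fun h => hInv.hdisj v hv (hR₁sub (hR₂sub h))
    · intro v hv x hx
      rw [hV', Finset.mem_insert, Finset.mem_insert] at hv
      rcases hv with rfl | rfl | hv
      · rw [hd']
        simp only [if_pos rfl]
        exact hda x (hR₂sub hx)
      · rw [hd']
        simp only [if_neg (fun h => hab h.symm : ¬ v = a), if_pos rfl]
        exact hdb x hx
      · rw [hd'V v hv]
        exact hInv.hd v hv x (hR₁sub (hR₂sub hx))
  have hVsub : V ⊆ V' := fun v hv =>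
    Finset.mem_insert_of_mem (Finset.mem_insert_of_mem hv)
  have hTsub : Tset Δ d e V ⊆ Tset Δ d' e V' := by
    intro x hx
    unfold Tset at hx ⊢
    rw [Finset.mem_insert, Finset.mem_union] at hx
    rcases hx with rfl | hx | hx
    · exact Finset.mem_insert_self _ _
    · obtain ⟨v, hv, rfl⟩ := Finset.mem_image.mp hx
      refine Finset.mem_insert_of_mem (Finset.mem_union_left _ ?_)
      exact Finset.mem_image.mpr ⟨v, hVsub hv, hd'V v hv⟩
    · obtain ⟨p, hp, rfl⟩ := Finset.mem_image.mp hx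
      obtain ⟨h1, h2, hne⟩ := Finset.mem_offDiag.mp hp
      refine Finset.mem_insert_of_mem (Finset.mem_union_right _ ?_)
      have hpd : p ∈ V'.offDiag := Finset.mem_offDiag.mpr ⟨hVsub h1, hVsub h2, hne⟩
      exact Finset.mem_image_of_mem _ hpd
  have hcnew : c' ∈ Tset Δ d' e V' := by
    have hpd : (a, b) ∈ V'.offDiag := Finset.mem_offDiag.mpr
      ⟨Finset.mem_insert_self _ _,
       Finset.mem_insert_of_mem (Finset.mem_insert_self _ _), hab⟩
    have him : edgeCol Δ a b ∈ V'.offDiag.image (fun p => edgeCol Δ p.1 p.2) :=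
      Finset.mem_image_of_mem (fun p => edgeCol Δ p.1 p.2) hpd
    unfold Tset
    exact Finset.mem_insert_of_mem (Finset.mem_union_right _ (habc ▸ him))
  have hss : Tset Δ d e V ⊂ Tset Δ d' e V' :=
    (Finset.ssubset_iff_of_subset hTsub).mpr ⟨c', hcnew, hc'T⟩
  exact ⟨V', R₂, d', hInv', Finset.card_lt_card hss⟩

lemma build_loop (hcol : IsColouring Δ k) (n : ℕ) (hk : 2 ^ n < k) (e : ℕ) :
    ∀ (fuel : ℕ) (V : Finset ℕ) (R : Set ℕ) (d : ℕ → ℕ), Inv Δ V R d e →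
      2 ^ n < (Tset Δ d e V).card + fuel →
      ∃ V' R' d', Inv Δ V' R' d' e ∧ 2 ^ n < (Tset Δ d' e V').card := by
  intro fuel
  induction fuel with
  | zero =>
    intro V R d hInv hcard
    exact ⟨V, R, d, hInv, by omega⟩
  | succ f ih =>
    intro V R d hInv hcard
    by_cases h : 2 ^ n < (Tset Δ d e V).card
    · exact ⟨V, R, d, hInv, h⟩
    · obtain ⟨V', R', d', hInv', hlt⟩ := build_step hcol hInv (by omega)
      exact ih V' R' d' hInv' (by omega)

end FMDaux

/-- **Corollary 5.** If `k ≥ 2^n + 1`, then `F_Δ ∩ ([2^(n+1)] \ [2^n]) ≠ ∅`: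
there is `m ∈ F_Δ` with `2^n < m ≤ 2^(n+1)`. -/
theorem FSet_meets_dyadic_interval (k n : ℕ) (Δ : ℕ → ℕ → ℕ)
    (hΔ : IsColouring Δ k) (hk : 2 ^ n + 1 ≤ k) :
    ∃ m ∈ FSet Δ k, 2 ^ n < m ∧ m ≤ 2 ^ (n + 1) := by
  classical
  obtain ⟨e, R₀, hR₀, hmono₀⟩ := FMDaux.exists_mono hΔ
  have hInv₀ : FMDaux.Inv Δ ∅ R₀ (fun _ => e) e :=
    ⟨hR₀, hmono₀, by simp, by simp⟩
  have hc0 : (FMDaux.Tset Δ (fun _ => e) e ∅).card = 1 := by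
    rw [FMDaux.Tset_empty, Finset.card_singleton]
  obtain ⟨V, R, d, hInv, hbig⟩ := FMDaux.build_loop hΔ n (by omega) e (2 ^ n) ∅ R₀
    (fun _ => e) hInv₀ (by omega)
  obtain ⟨S, hSV, h1, h2⟩ := FMDaux.prune (Δ := Δ) d e n V.card V le_rfl hbig
  have hInvS : FMDaux.Inv Δ S R d e :=
    ⟨hInv.hR, hInv.hmono, fun v hv => hInv.hdisj v (hSV hv),
      fun v hv => hInv.hd v (hSV hv)⟩
  refine ⟨(FMDaux.Tset Δ d e S).card,
    ⟨?_, (↑S ∪ R : Set ℕ), hInv.hR.mono Set.subset_union_right, ?_⟩, h1, h2⟩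
  · rw [Finset.mem_Icc]
    have h1' := Nat.one_le_two_pow (n := n)
    have hcc := Finset.card_le_card (FMDaux.Tset_subset_Icc hΔ hInvS)
    rw [Nat.card_Icc] at hcc
    omega
  · rw [FMDaux.colourSet_eq hInvS, Set.ncard_coe_finset]
end
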